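/- arXiv:0805.3195 — 4 statements merged into one kernel-verified Lean document; each statement's English description precedes it below -/
import Mathlib

section
/- Suppose a group Γ acts by isometries on a metric space X with all balls finite, o ∈ X has stabilizer Γ₀, and Γ₀ acts transitively on every sphere about o inside the orbit Γ·o. Then the Hecke algebra ℂ[Γ,Γ₀] is commutative, i.e., (Γ,Γ₀) is a Gelfand pair. -/
/-!
Gelfand's trick. If `y⁻¹ ∈ Γ₀ y Γ₀` for every `y`, every `Γ₀`-bi-invariant function satisfies
`f (y⁻¹) = f y`, while reindexing the convolution sum by `c ↦ x⁻¹ c` gives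
`(f * g)(x⁻¹) = (ǧ * f̌)(x)` with `f̌ y = f (y⁻¹)`. Hence `(f * g)(x) = (g * f)(x⁻¹) = (g * f)(x)`,
the last step because `g * f` is again bi-invariant. For `Γ₀ = Stab(o)` the hypothesis holds:
`y • o` and `y⁻¹ • o` are at the same distance from `o`, so `h • y • o = y⁻¹ • o` for some
`h ∈ Γ₀`, whence `y h y ∈ Γ₀` and `y⁻¹ = h y (y h y)⁻¹`.
-/

open scoped Pointwise

/-- The double coset `HgH` as a subset of the group. -/
def doset' {Γ : Type*} [Group Γ] (H : Subgroup Γ) (g : Γ) : Set Γ :=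
  (H : Set Γ) * {g} * (H : Set Γ)

/-- Convolution of two `H`-bi-invariant functions, computed as a (finite) sum over the
left coset space `Γ ⧸ H` using fixed coset representatives. -/
noncomputable def conv {Γ : Type*} [Group Γ] (H : Subgroup Γ) (f g : Γ → ℂ) (x : Γ) : ℂ :=
  ∑ᶠ c : Γ ⧸ H, f (Quotient.out c) * g ((Quotient.out c)⁻¹ * x)

open MulAction

section HeckeConvolution

variable {Γ : Type*} [Group Γ] {H : Subgroup Γ}

def BiInvariant {α : Type*} (H : Subgroup Γ) (f : Γ → α) : Prop :=
  ∀ h₁ h₂ : Γ, h₁ ∈ H → h₂ ∈ H → ∀ x, f (h₁ * x * h₂) = f x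

namespace BiInvariant

variable {α : Type*} {f : Γ → α}

theorem apply_mul_left (hf : BiInvariant H f) {h : Γ} (hh : h ∈ H) (x : Γ) :
    f (h * x) = f x := by
  simpa using hf h 1 hh H.one_mem x

theorem apply_mul_right (hf : BiInvariant H f) (x : Γ) {k : Γ} (hk : k ∈ H) :
    f (x * k) = f x := by
  simpa using hf 1 k H.one_mem hk x

theorem apply_inv (hf : BiInvariant H f) (hinv : ∀ y : Γ, y⁻¹ ∈ doset' H y) (x : Γ) :
    f x⁻¹ = f x := by
  obtain ⟨h₁, hh₁, h₂, hh₂, hx⟩ := DoubleCoset.mem_doubleCoset.mp (hinv x)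
  rw [hx, hf h₁ h₂ hh₁ hh₂]

end BiInvariant

theorem finsum_quotient_out_mul_left {M : Type*} [AddCommMonoid M] {F : Γ → M}
    (hF : ∀ z, ∀ k ∈ H, F (z * k) = F z) (a : Γ) :
    ∑ᶠ c : Γ ⧸ H, F (a * c.out) = ∑ᶠ c : Γ ⧸ H, F c.out := by
  have hout : ∀ c : Γ ⧸ H, F (a * c.out) = F (a • c).out := by
    intro c
    have hac : a • c = ((a * c.out : Γ) : Γ ⧸ H) :=
      (congrArg (a • ·) (QuotientGroup.out_eq' c).symm).trans (Quotient.smul_mk H a c.out)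
    obtain ⟨k, hk⟩ := QuotientGroup.mk_out_eq_mul H (a * c.out)
    rw [hac, hk, hF _ _ k.2]
  simp_rw [hout]
  exact finsum_comp_equiv (toPerm a : Equiv.Perm (Γ ⧸ H)) (f := fun c => F c.out)

variable {f g : Γ → ℂ}

theorem conv_inv (hf : ∀ z, ∀ k ∈ H, f (z * k) = f z) (hg : ∀ z, ∀ k ∈ H, g (k * z) = g z)
    (x : Γ) : conv H f g x⁻¹ = conv H (fun z => g z⁻¹) (fun z => f z⁻¹) x := by
  have hF : ∀ z, ∀ k ∈ H, f (z * k) * g ((z * k)⁻¹ * x⁻¹) = f z * g (z⁻¹ * x⁻¹) := by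
    intro z k hk
    rw [hf z k hk, mul_inv_rev, mul_assoc, hg _ _ (inv_mem hk)]
  refine (finsum_quotient_out_mul_left (F := fun z => f z * g (z⁻¹ * x⁻¹)) hF x⁻¹).symm.trans
    (finsum_congr fun c => ?_)
  dsimp only
  rw [mul_inv_rev, inv_inv, mul_inv_rev, inv_inv, mul_inv_cancel_right, mul_comm]

theorem conv_mul_left (hf : BiInvariant H f) (hg : ∀ z, ∀ k ∈ H, g (k * z) = g z)
    {h : Γ} (hh : h ∈ H) (x : Γ) : conv H f g (h * x) = conv H f g x := by
  have hF : ∀ z, ∀ k ∈ H, f (z * k) * g ((z * k)⁻¹ * (h * x)) = f z * g (z⁻¹ * (h * x)) := by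
    intro z k hk
    rw [hf.apply_mul_right z hk, mul_inv_rev, mul_assoc, hg _ _ (inv_mem hk)]
  refine (finsum_quotient_out_mul_left (F := fun z => f z * g (z⁻¹ * (h * x))) hF h).symm.trans
    (finsum_congr fun c => ?_)
  rw [hf.apply_mul_left hh, mul_inv_rev, mul_assoc, inv_mul_cancel_left]

theorem conv_mul_right (hg : ∀ z, ∀ k ∈ H, g (z * k) = g z) (x : Γ) {k : Γ} (hk : k ∈ H) :
    conv H f g (x * k) = conv H f g x := by
  simp only [conv, ← mul_assoc, hg _ k hk]

theorem conv_comm_of_forall_inv_mem_doset' (hinv : ∀ y : Γ, y⁻¹ ∈ doset' H y)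
    (hf : BiInvariant H f) (hg : BiInvariant H g) (x : Γ) :
    conv H f g x = conv H g f x := by
  obtain ⟨h, hh, k, hk, hx⟩ := DoubleCoset.mem_doubleCoset.mp (hinv x)
  calc conv H f g x
      = conv H (fun z => f z⁻¹) (fun z => g z⁻¹) x := by
        simp only [hf.apply_inv hinv, hg.apply_inv hinv]
    _ = conv H g f x⁻¹ :=
        (conv_inv (fun z _ => hg.apply_mul_right z) (fun z _ hk => hf.apply_mul_left hk z) x).symm
    _ = conv H g f x := by
        rw [hx, conv_mul_right (fun z _ => hf.apply_mul_right z) _ hk,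
          conv_mul_left hg (fun z _ hk => hf.apply_mul_left hk z) hh]

end HeckeConvolution

theorem inv_mem_doset'_stabilizer {Γ X : Type*} [Group Γ] [MetricSpace X] [MulAction Γ X]
    (hiso : ∀ (γ : Γ) (x y : X), dist (γ • x) (γ • y) = dist x y) {o : X}
    (htrans : ∀ g g' : Γ, dist (g • o) o = dist (g' • o) o →
        ∃ h ∈ stabilizer Γ o, h • (g • o) = g' • o)
    (y : Γ) : y⁻¹ ∈ doset' (stabilizer Γ o) y := by
  have hdist : dist (y • o) o = dist (y⁻¹ • o) o := by
    rw [← hiso y⁻¹, inv_smul_smul, dist_comm]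
  obtain ⟨h, hh, hho⟩ := htrans y y⁻¹ hdist
  have hyhy : y * h * y ∈ stabilizer Γ o := by
    rw [mem_stabilizer_iff, mul_smul, mul_smul, hho, smul_inv_smul]
  exact DoubleCoset.mem_doubleCoset.mpr ⟨h, hh, (y * h * y)⁻¹, inv_mem hyhy, by group⟩

theorem stmt_5_general {Γ X : Type*} [Group Γ] [MetricSpace X] [MulAction Γ X]
    (hiso : ∀ (γ : Γ) (x y : X), dist (γ • x) (γ • y) = dist x y)
    (o : X)
    (htrans : ∀ g g' : Γ, dist (g • o) o = dist (g' • o) o →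
        ∃ h ∈ MulAction.stabilizer Γ o, h • (g • o) = g' • o) :
    ∀ f g : Γ → ℂ,
      (∀ h₁ h₂ : Γ, h₁ ∈ MulAction.stabilizer Γ o → h₂ ∈ MulAction.stabilizer Γ o →
        ∀ x, f (h₁ * x * h₂) = f x) →
      (∀ h₁ h₂ : Γ, h₁ ∈ MulAction.stabilizer Γ o → h₂ ∈ MulAction.stabilizer Γ o →
        ∀ x, g (h₁ * x * h₂) = g x) →
      (∃ S : Finset Γ, ∀ x, f x ≠ 0 → ∃ s ∈ S, x ∈ doset' (MulAction.stabilizer Γ o) s) →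
      (∃ S : Finset Γ, ∀ x, g x ≠ 0 → ∃ s ∈ S, x ∈ doset' (MulAction.stabilizer Γ o) s) →
      ∀ x : Γ, conv (MulAction.stabilizer Γ o) f g x = conv (MulAction.stabilizer Γ o) g f x :=
  fun _ _ hf hg _ _ =>
    conv_comm_of_forall_inv_mem_doset' (inv_mem_doset'_stabilizer hiso htrans) hf hg

/-- If `Γ` acts by isometries on a metric space with all balls finite,
`Γ₀ = Stab(o)`, and `Γ₀` acts transitively on every sphere about `o` inside the orbit
`Γ·o`, then the Hecke algebra `ℂ[Γ,Γ₀]` — realized as the `Γ₀`-bi-invariant functions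
supported on finitely many double cosets, under convolution — is commutative:
`(Γ,Γ₀)` is a Gelfand pair. -/
theorem stmt_5 {Γ X : Type*} [Group Γ] [MetricSpace X] [MulAction Γ X]
    (hiso : ∀ (γ : Γ) (x y : X), dist (γ • x) (γ • y) = dist x y)
    (o : X) (hballs : ∀ r : ℝ, (Metric.closedBall o r).Finite)
    (htrans : ∀ g g' : Γ, dist (g • o) o = dist (g' • o) o →
        ∃ h ∈ MulAction.stabilizer Γ o, h • (g • o) = g' • o) :
    ∀ f g : Γ → ℂ,
      (∀ h₁ h₂ : Γ, h₁ ∈ MulAction.stabilizer Γ o → h₂ ∈ MulAction.stabilizer Γ o →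
        ∀ x, f (h₁ * x * h₂) = f x) →
      (∀ h₁ h₂ : Γ, h₁ ∈ MulAction.stabilizer Γ o → h₂ ∈ MulAction.stabilizer Γ o →
        ∀ x, g (h₁ * x * h₂) = g x) →
      (∃ S : Finset Γ, ∀ x, f x ≠ 0 → ∃ s ∈ S, x ∈ doset' (MulAction.stabilizer Γ o) s) →
      (∃ S : Finset Γ, ∀ x, g x ≠ 0 → ∃ s ∈ S, x ∈ doset' (MulAction.stabilizer Γ o) s) →
      ∀ x : Γ, conv (MulAction.stabilizer Γ o) f g x = conv (MulAction.stabilizer Γ o) g f x :=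
  stmt_5_general hiso o htrans
end

section
/- Let q ≥ 2 be an integer and define polynomials Γ_n ∈ ℂ[T] by Γ₀ = 1, Γ₁ = T, and Γ_{n+1} = Γ₁Γ_n − (q+δ_{n,1})Γ_{n−1} for n ≥ 1. Then for all m ≥ n > 0: Γ_nΓ_m = Γ_{m+n} + q^{n−1}(q+δ_{mn})Γ_{m−n} + (q−1)·Σ_{l=1}^{n−1} q^{l−1} Γ_{m+n−2l}. -/
/-!
Write `E p k` (`productExpansion`) for the claimed expansion of `Γ_{p+1} Γ_{p+1+k}`.
Expanding `Γ_{p+2}` by the recursion, and then `Γ_1 Γ_{p+k+2}` by the recursion again, gives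
`Γ_{p+2} Γ_{p+2+k} = Γ_{p+1} Γ_{p+3+k} + q Γ_{p+1} Γ_{p+1+k} - (q + δ_{p0}) Γ_p Γ_{p+2+k}`,
a relation with no multiplication by `Γ_1` left in it. The expansions `E` satisfy the same
linear relation (a reindexing of the geometric sums), so the product formula follows by
two-step induction on `p`, for all `k` at once.
-/

open Finset

namespace SphericalHecke

variable {R : Type*} [CommRing R] (q : R) (Γ : ℕ → R)

def tail (p k : ℕ) : R :=
  ∑ i ∈ range p, q ^ i * Γ (k + 2 * (p - i))

def productExpansion (p k : ℕ) : R :=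
  Γ (k + 2 * (p + 1)) + q ^ p * (q + if k = 0 then 1 else 0) * Γ k + (q - 1) * tail q Γ p k

theorem tail_zero (k : ℕ) : tail q Γ 0 k = 0 := by
  simp [tail]

theorem tail_succ (p k : ℕ) : tail q Γ (p + 1) k = Γ (k + 2 * (p + 1)) + q * tail q Γ p k := by
  rw [tail, sum_range_succ', tail, mul_sum, add_comm, pow_zero, one_mul, Nat.sub_zero]
  congr 1
  refine sum_congr rfl fun i _ => ?_
  rw [Nat.add_sub_add_right, pow_succ', mul_assoc]

theorem productExpansion_one (k : ℕ) :
    productExpansion q Γ 1 k =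
      productExpansion q Γ 0 (k + 2) + q * productExpansion q Γ 0 k - (q + 1) * Γ (k + 2) := by
  simp only [productExpansion, tail_succ, tail_zero, zero_add, pow_zero, pow_one,
    Nat.add_eq_zero_iff, OfNat.ofNat_ne_zero, and_false, if_false]
  rw [show k + 2 + 2 * (0 + 1) = k + 2 * (1 + 1) by omega, show k + 2 * (0 + 1) = k + 2 by rfl]
  ring

theorem productExpansion_add_two (p k : ℕ) :
    productExpansion q Γ (p + 2) k =
      productExpansion q Γ (p + 1) (k + 2) + q * productExpansion q Γ (p + 1) k
        - q * productExpansion q Γ p (k + 2) := by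
  have h₁ : tail q Γ (p + 2) k = Γ (k + 2 * (p + 2)) + q * tail q Γ (p + 1) k :=
    tail_succ q Γ (p + 1) k
  have h₂ : tail q Γ (p + 1) (k + 2) = Γ (k + 2 * (p + 2)) + q * tail q Γ p (k + 2) := by
    rw [tail_succ, show k + 2 + 2 * (p + 1) = k + 2 * (p + 2) by omega]
  simp only [productExpansion, Nat.add_eq_zero_iff, OfNat.ofNat_ne_zero, and_false, if_false]
  rw [show k + 2 + 2 * (p + 1 + 1) = k + 2 * (p + 2 + 1) by omega,
    show k + 2 + 2 * (p + 1) = k + 2 * (p + 2) by omega]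
  linear_combination (q - 1) * (h₁ - h₂)

variable {q Γ}
variable (hrec : ∀ n : ℕ, 1 ≤ n → Γ (n + 1) = Γ 1 * Γ n - (q + if n = 1 then 1 else 0) * Γ (n - 1))
include hrec

theorem mul_eq_productExpansion_zero (k : ℕ) : Γ 1 * Γ (1 + k) = productExpansion q Γ 0 k := by
  have h := hrec (k + 1) (by omega)
  simp only [Nat.add_eq_right, Nat.add_sub_cancel] at h
  rw [productExpansion, tail_zero, add_comm 1 k]
  linear_combination -h

theorem mul_succ_succ_eq (p k : ℕ) :
    Γ (p + 2) * Γ (p + 2 + k) =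
      Γ (p + 1) * Γ (p + 1 + (k + 2)) + q * (Γ (p + 1) * Γ (p + 1 + k))
        - (q + if p = 0 then 1 else 0) * (Γ p * Γ (p + (k + 2))) := by
  have hΓ : Γ (p + 2) = Γ 1 * Γ (p + 1) - (q + if p = 0 then 1 else 0) * Γ p := by
    simpa only [Nat.add_eq_right, Nat.add_sub_cancel] using hrec (p + 1) (by omega)
  have hprod := hrec (p + k + 2) (by omega)
  rw [if_neg (by omega), add_zero, show p + k + 2 - 1 = p + 1 + k by omega] at hprod
  rw [show p + 1 + (k + 2) = p + k + 2 + 1 by omega, show p + (k + 2) = p + k + 2 by omega,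
    show p + 2 + k = p + k + 2 by omega, hprod]
  linear_combination Γ (p + k + 2) * hΓ

theorem mul_eq_productExpansion (h0 : Γ 0 = 1) (p k : ℕ) :
    Γ (p + 1) * Γ (p + 1 + k) = productExpansion q Γ p k := by
  induction p using Nat.twoStepInduction generalizing k with
  | zero => exact mul_eq_productExpansion_zero hrec k
  | one =>
    rw [mul_succ_succ_eq hrec, productExpansion_one, if_pos rfl, h0, one_mul,
      mul_eq_productExpansion_zero hrec, mul_eq_productExpansion_zero hrec, zero_add]
  | more p ih₀ ih₁ =>
    rw [show p + 2 + 1 = p + 1 + 2 by rfl, mul_succ_succ_eq hrec, if_neg p.succ_ne_zero, add_zero,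
      ih₁, ih₁, ih₀, productExpansion_add_two]

theorem mul_eq_of_le (h0 : Γ 0 = 1) (m n : ℕ) (hn : 0 < n) (hnm : n ≤ m) :
    Γ n * Γ m = Γ (m + n) + q ^ (n - 1) * (q + if m = n then 1 else 0) * Γ (m - n)
      + (q - 1) * ∑ l ∈ Icc 1 (n - 1), q ^ (l - 1) * Γ (m + n - 2 * l) := by
  obtain ⟨p, rfl⟩ : ∃ p, n = p + 1 := ⟨n - 1, by omega⟩
  obtain ⟨k, rfl⟩ := Nat.exists_eq_add_of_le hnm
  have hsum : ∑ l ∈ Icc 1 p, q ^ (l - 1) * Γ (p + 1 + k + (p + 1) - 2 * l) = tail q Γ p k := by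
    rw [← Ico_add_one_right_eq_Icc, sum_Ico_eq_sum_range, Nat.add_sub_cancel, tail]
    refine sum_congr rfl fun i hi => ?_
    rw [mem_range] at hi
    rw [Nat.add_sub_cancel_left, show p + 1 + k + (p + 1) - 2 * (1 + i) = k + 2 * (p - i) by omega]
  rw [mul_eq_productExpansion hrec h0, productExpansion, Nat.add_sub_cancel, Nat.add_sub_cancel_left,
    hsum, show p + 1 + k + (p + 1) = k + 2 * (p + 1) by omega]
  simp only [Nat.add_eq_left]

end SphericalHecke

theorem stmt_8_general (q : ℕ) (Γf : ℕ → Polynomial ℂ)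
    (h0 : Γf 0 = 1)
    (hrec : ∀ n : ℕ, 1 ≤ n →
      Γf (n + 1) = Γf 1 * Γf n -
        Polynomial.C ((q : ℂ) + if n = 1 then 1 else 0) * Γf (n - 1)) :
    ∀ m n : ℕ, 0 < n → n ≤ m →
      Γf n * Γf m = Γf (m + n)
        + Polynomial.C ((q : ℂ) ^ (n - 1) * ((q : ℂ) + if m = n then 1 else 0)) * Γf (m - n)
        + Polynomial.C ((q : ℂ) - 1) *
            ∑ l ∈ Finset.Icc 1 (n - 1),
              Polynomial.C ((q : ℂ) ^ (l - 1)) * Γf (m + n - 2 * l) := by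
  have hrecC : ∀ n : ℕ, 1 ≤ n →
      Γf (n + 1) = Γf 1 * Γf n - (Polynomial.C (q : ℂ) + if n = 1 then 1 else 0) * Γf (n - 1) := by
    simpa only [map_add, apply_ite Polynomial.C, map_one, map_zero] using hrec
  intro m n hn hnm
  simpa only [map_add, map_sub, map_mul, map_pow, apply_ite Polynomial.C, map_one, map_zero]
    using SphericalHecke.mul_eq_of_le hrecC h0 m n hn hnm

/-- the complete multiplication table of the spherical Hecke algebra of the
`(q+1)`-regular tree: for `m ≥ n > 0`,
`Γ_nΓ_m = Γ_{m+n} + q^{n−1}(q+δ_{mn})Γ_{m−n} + (q−1)·Σ_{l=1}^{n−1} q^{l−1} Γ_{m+n−2l}`. -/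
theorem stmt_8 (q : ℕ) (hq : 2 ≤ q) (Γf : ℕ → Polynomial ℂ)
    (h0 : Γf 0 = 1) (h1 : Γf 1 = Polynomial.X)
    (hrec : ∀ n : ℕ, 1 ≤ n →
      Γf (n + 1) = Γf 1 * Γf n -
        Polynomial.C ((q : ℂ) + if n = 1 then 1 else 0) * Γf (n - 1)) :
    ∀ m n : ℕ, 0 < n → n ≤ m →
      Γf n * Γf m = Γf (m + n)
        + Polynomial.C ((q : ℂ) ^ (n - 1) * ((q : ℂ) + if m = n then 1 else 0)) * Γf (m - n)
        + Polynomial.C ((q : ℂ) - 1) *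
            ∑ l ∈ Finset.Icc 1 (n - 1),
              Polynomial.C ((q : ℂ) ^ (l - 1)) * Γf (m + n - 2 * l) :=
  stmt_8_general q Γf h0 hrec
end

section
/- Let Γ be a group acting by automorphisms on a tree T with at least 3 edges at each vertex, and suppose the stabilizer Γ₀ of a vertex o is a proper subgroup of Γ acting transitively on each sphere about o, and that Γ contains an element γ with d(γ·o, o) ≥ D for a given even integer D ≥ 0. If moreover there exist at least 3 edges at each vertex, then there exists an elliptic element δ ∈ Γ (i.e., δ fixes some vertex of T) with d(δ·o, o) = D. -/
/-!
Let `u = γ • o`, so `d(o, u) ≥ D = 2m`. In a tree at most one neighbour of a vertex is closer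
to a given point, so with three neighbours everywhere one can always step away from two points
at once. Going back `m` steps from `u` towards `o` and then `m` steps away from both `o` and `u`
reaches a vertex `w` with `d(o, w) = d(o, u)` and `d(u, w) = 2m`. Sphere transitivity gives
`h ∈ Γ₀` with `h • u = w`; the conjugate `γ⁻¹ h γ` fixes `γ⁻¹ • o` and moves `o` to `γ⁻¹ • w`,
at distance `d(w, u) = D` from `o`.
-/

namespace SimpleGraph

variable {V : Type*} {G : SimpleGraph V}

lemma Walk.dist_getVert_left {u v : V} {p : G.Walk u v} (hp : p.length = G.dist u v)
    {j : ℕ} (hj : j ≤ p.length) : G.dist u (p.getVert j) = j := by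
  rw [← length_eq_dist_of_subwalk hp (p.isSubwalk_take j), Walk.take_length]
  omega

lemma Walk.dist_getVert_right {u v : V} {p : G.Walk u v} (hp : p.length = G.dist u v)
    (j : ℕ) : G.dist (p.getVert j) v = G.dist u v - j := by
  rw [← length_eq_dist_of_subwalk hp (p.isSubwalk_drop j), Walk.drop_length, hp]

lemma Reachable.exists_dist_eq_and_dist_eq_sub {u v : V} (h : G.Reachable u v) {j : ℕ}
    (hj : j ≤ G.dist u v) : ∃ c, G.dist u c = j ∧ G.dist c v = G.dist u v - j := by
  obtain ⟨p, hp⟩ := h.exists_walk_length_eq_dist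
  exact ⟨p.getVert j, Walk.dist_getVert_left hp (hp ▸ hj), Walk.dist_getVert_right hp j⟩

lemma IsAcyclic.eq_of_adj_of_dist_eq_dist_add_one (hG : G.IsAcyclic) {o x z₁ z₂ : V}
    (h₁ : G.Adj x z₁) (h₂ : G.Adj x z₂) (hd₁ : G.dist o x = G.dist o z₁ + 1)
    (hd₂ : G.dist o x = G.dist o z₂ + 1) : z₁ = z₂ := by
  rw [dist_comm, dist_comm (u := o)] at hd₁ hd₂
  have hxo : G.Reachable x o := Reachable.of_dist_ne_zero (by omega)
  have geodesic_through {z : V} (h : G.Adj x z) (hd : G.dist x o = G.dist z o + 1) :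
      ∃ p : G.Path x o, p.1.snd = z := by
    obtain ⟨q, -, hq⟩ := (h.symm.reachable.trans hxo).exists_path_of_dist
    have hl : (Walk.cons h q).length = G.dist x o := by rw [Walk.length_cons, hq, hd]
    exact ⟨⟨_, Walk.isPath_of_length_eq_dist _ hl⟩, Walk.snd_cons q h⟩
  obtain ⟨p₁, rfl⟩ := geodesic_through h₁ hd₁
  obtain ⟨p₂, rfl⟩ := geodesic_through h₂ hd₂
  rw [(hG.subsingleton_path x o).elim p₁ p₂]

lemma IsTree.exists_adj_dist_eq_add_one_and_dist_eq_add_one (hG : G.IsTree) {x : V}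
    (hx : 3 ≤ (G.neighborSet x).ncard) (o u : V) :
    ∃ z, G.Adj x z ∧ G.dist o z = G.dist o x + 1 ∧ G.dist u z = G.dist u x + 1 := by
  let closer (c : V) : Set V := {z ∈ G.neighborSet x | G.dist c x = G.dist c z + 1}
  have closer_subsingleton (c : V) : (closer c).Subsingleton := fun z₁ h₁ z₂ h₂ =>
    hG.isAcyclic.eq_of_adj_of_dist_eq_dist_add_one h₁.1 h₂.1 h₁.2 h₂.2
  by_contra! hcon
  have hcover : G.neighborSet x ⊆ closer o ∪ closer u := by
    intro z hz
    rcases hG.dist_eq_dist_add_one_of_adj o hz with ho | ho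
    · exact Or.inl ⟨hz, ho⟩
    rcases hG.dist_eq_dist_add_one_of_adj u hz with hu | hu
    · exact Or.inr ⟨hz, hu⟩
    exact absurd hu (hcon z hz ho)
  have hfin : (G.neighborSet x).Finite := Set.finite_of_ncard_ne_zero (by omega)
  have hunion := Set.ncard_le_ncard hcover
    (hfin.subset (Set.union_subset (fun _ h => h.1) (fun _ h => h.1)))
  have hle (c : V) : (closer c).ncard ≤ 1 :=
    (Set.ncard_le_one_iff (closer_subsingleton c).finite).2
      fun h₁ h₂ => closer_subsingleton c h₁ h₂
  linarith [hle o, hle u, Set.ncard_union_le (closer o) (closer u)]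

lemma IsTree.exists_dist_eq_add_and_dist_eq_add (hG : G.IsTree)
    (hdeg : ∀ x, 3 ≤ (G.neighborSet x).ncard) (o u x : V) (k : ℕ) :
    ∃ w, G.dist o w = G.dist o x + k ∧ G.dist u w = G.dist u x + k := by
  induction k with
  | zero => exact ⟨x, rfl, rfl⟩
  | succ k ih =>
    obtain ⟨w, hwo, hwu⟩ := ih
    obtain ⟨z, -, hzo, hzu⟩ := hG.exists_adj_dist_eq_add_one_and_dist_eq_add_one (hdeg w) o u
    exact ⟨z, by omega, by omega⟩

lemma IsTree.exists_dist_eq_and_dist_eq_add_self (hG : G.IsTree)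
    (hdeg : ∀ x, 3 ≤ (G.neighborSet x).ncard) {o u : V} {m : ℕ} (hm : m + m ≤ G.dist o u) :
    ∃ w, G.dist o w = G.dist o u ∧ G.dist u w = m + m := by
  obtain ⟨c, hoc, hcu⟩ := (hG.connected o u).exists_dist_eq_and_dist_eq_sub
    (j := G.dist o u - m) (by omega)
  obtain ⟨w, hwo, hwu⟩ := hG.exists_dist_eq_add_and_dist_eq_add hdeg o u c m
  refine ⟨w, by omega, ?_⟩
  rw [hwu, dist_comm, hcu]
  omega

section GroupAction

variable {Γ : Type*} [Group Γ] [MulAction Γ V]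

lemma dist_smul_le_of_reachable
    (haut : ∀ (γ : Γ) (a b : V), G.Adj a b ↔ G.Adj (γ • a) (γ • b))
    (γ : Γ) {a b : V} (h : G.Reachable a b) : G.dist (γ • a) (γ • b) ≤ G.dist a b := by
  obtain ⟨p, hp⟩ := h.exists_walk_length_eq_dist
  simpa [hp] using dist_le (p.map ⟨(γ • ·), (haut γ _ _).mp⟩)

lemma Connected.dist_smul_smul
    (haut : ∀ (γ : Γ) (a b : V), G.Adj a b ↔ G.Adj (γ • a) (γ • b))
    (hG : G.Connected) (γ : Γ) (a b : V) : G.dist (γ • a) (γ • b) = G.dist a b := by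
  refine le_antisymm (dist_smul_le_of_reachable haut γ (hG a b)) ?_
  simpa using dist_smul_le_of_reachable haut γ⁻¹ (hG (γ • a) (γ • b))

end GroupAction

end SimpleGraph

theorem stmt_11_general {V Γ : Type*} [Group Γ] (G : SimpleGraph V) [MulAction Γ V]
    (haut : ∀ (γ : Γ) (a b : V), G.Adj a b ↔ G.Adj (γ • a) (γ • b))
    (hconn : G.Connected) (hac : G.IsAcyclic)
    (hdeg : ∀ u : V, 3 ≤ (G.neighborSet u).ncard)
    (o : V)
    (htrans : ∀ u w : V, G.dist o u = G.dist o w →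
        ∃ h ∈ MulAction.stabilizer Γ o, h • u = w)
    (D : ℕ) (hD : Even D) (hbig : ∃ γ : Γ, D ≤ G.dist (γ • o) o) :
    ∃ δ : Γ, (∃ u : V, δ • u = u) ∧ G.dist (δ • o) o = D := by
  obtain ⟨γ, hγ⟩ := hbig
  obtain ⟨m, rfl⟩ := hD
  obtain ⟨w, hwo, hwu⟩ :=
    SimpleGraph.IsTree.exists_dist_eq_and_dist_eq_add_self ⟨hconn, hac⟩ hdeg
      (hγ.trans_eq SimpleGraph.dist_comm)
  obtain ⟨h, hh, rfl⟩ := htrans (γ • o) w hwo.symm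
  refine ⟨γ⁻¹ * h * γ, ⟨γ⁻¹ • o, by simp [mul_smul, MulAction.mem_stabilizer_iff.mp hh]⟩, ?_⟩
  calc G.dist ((γ⁻¹ * h * γ) • o) o = G.dist (γ⁻¹ • h • γ • o) (γ⁻¹ • γ • o) := by
        simp [mul_smul]
    _ = m + m := by rw [hconn.dist_smul_smul haut, SimpleGraph.dist_comm, hwu]

/-- Let `Γ` act by automorphisms on a locally finite tree with vertex
degrees ≥ 3, with the stabilizer `Γ₀` of a vertex `o` a proper subgroup acting
transitively on each sphere about `o`. If some `γ ∈ Γ` satisfies `d(γ·o,o) ≥ D` for a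
given even `D ≥ 0`, then there is an elliptic element `δ ∈ Γ` (fixing some vertex) with
`d(δ·o, o) = D`. -/
theorem stmt_11 {V Γ : Type*} [Group Γ] (G : SimpleGraph V) [MulAction Γ V]
    (haut : ∀ (γ : Γ) (a b : V), G.Adj a b ↔ G.Adj (γ • a) (γ • b))
    (hconn : G.Connected) (hac : G.IsAcyclic)
    (hfin : ∀ u : V, (G.neighborSet u).Finite)
    (hdeg : ∀ u : V, 3 ≤ (G.neighborSet u).ncard)
    (o : V) (hproper : MulAction.stabilizer Γ o ≠ ⊤)
    (htrans : ∀ u w : V, G.dist o u = G.dist o w →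
        ∃ h ∈ MulAction.stabilizer Γ o, h • u = w)
    (D : ℕ) (hD : Even D) (hbig : ∃ γ : Γ, D ≤ G.dist (γ • o) o) :
    ∃ δ : Γ, (∃ u : V, δ • u = u) ∧ G.dist (δ • o) o = D :=
  stmt_11_general G haut hconn hac hdeg o htrans D hD hbig
end

section
/- Let q ≥ 2 and let A be the unital *-algebra with basis {M_n : n ≥ 0} ∪ {monomials in an element [s]} satisfying [s]*[s] = q·1 and [s]ⁿ([s]*)ⁿ = Σ_{i=0}^{n} M_i for all n ≥ 0 (with M_0 = 1 and each M_n self-adjoint). Then the M_n satisfy the multiplication rules M_mM_n = M_nM_m = (q−1)q^{n−1}M_m for m > n > 0, and M_m² = (q−2)q^{m−1}M_m + (q−1)q^{m−1}·Σ_{i=0}^{m−1}M_i for m > 0. -/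
/-!
Put `P n := [s]ⁿ([s]*)ⁿ`. From `[s]*[s] = q` one gets `([s]*)ᵇ[s]ᵇ = qᵇ`, hence
`P a P b = P b P a = qᵇ P a` for `b ≤ a`. Since `M (n+1) = P (n+1) - P n`, every product of
two `M`'s expands into four such products, which collapse to the stated formulas.
-/

section

variable {R A : Type*} [CommRing R] [Ring A] [Algebra R A]

theorem pow_mul_pow_eq_smul_one {s t : A} {c : R} (h : t * s = c • 1) (n : ℕ) :
    t ^ n * s ^ n = c ^ n • 1 := by
  induction n with
  | zero => simp
  | succ n ih =>
    calc t ^ (n + 1) * s ^ (n + 1) = t ^ n * (t * s) * s ^ n := by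
          rw [pow_succ, pow_succ', mul_assoc, mul_assoc, mul_assoc]
      _ = c ^ (n + 1) • 1 := by
          rw [h, mul_smul_comm, mul_one, smul_mul_assoc, ih, smul_smul, pow_succ']

theorem pow_mul_pow_mul_pow_mul_pow_of_le {s t : A} {c : R} (h : t * s = c • 1) {a b : ℕ}
    (hba : b ≤ a) : s ^ a * t ^ a * (s ^ b * t ^ b) = c ^ b • (s ^ a * t ^ a) := by
  obtain ⟨k, rfl⟩ := Nat.exists_eq_add_of_le' hba
  calc s ^ (k + b) * t ^ (k + b) * (s ^ b * t ^ b)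
        = s ^ (k + b) * (t ^ k * (t ^ b * s ^ b)) * t ^ b := by simp only [pow_add, mul_assoc]
    _ = c ^ b • (s ^ (k + b) * t ^ (k + b)) := by
        rw [pow_mul_pow_eq_smul_one h, mul_smul_comm, mul_one, mul_smul_comm, smul_mul_assoc,
          mul_assoc, ← pow_add]

theorem pow_mul_pow_mul_pow_mul_pow_of_le' {s t : A} {c : R} (h : t * s = c • 1) {a b : ℕ}
    (hba : b ≤ a) : s ^ b * t ^ b * (s ^ a * t ^ a) = c ^ b • (s ^ a * t ^ a) := by
  obtain ⟨k, rfl⟩ := Nat.exists_eq_add_of_le hba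
  calc s ^ b * t ^ b * (s ^ (b + k) * t ^ (b + k))
        = s ^ b * ((t ^ b * s ^ b) * s ^ k) * t ^ (b + k) := by simp only [pow_add, mul_assoc]
    _ = c ^ b • (s ^ (b + k) * t ^ (b + k)) := by
        rw [pow_mul_pow_eq_smul_one h, smul_mul_assoc, one_mul, mul_smul_comm, smul_mul_assoc,
          ← pow_add]

variable {P : ℕ → A} {c : R}

theorem sub_mul_sub_eq_smul_of_lt (hP : ∀ a b, b ≤ a → P a * P b = c ^ b • P a) {m n : ℕ}
    (hnm : n < m) :
    (P (m + 1) - P m) * (P (n + 1) - P n) = ((c - 1) * c ^ n) • (P (m + 1) - P m) := by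
  rw [sub_mul, mul_sub, mul_sub, hP _ _ (by omega), hP _ _ (by omega), hP _ _ (by omega),
    hP _ _ (by omega), pow_succ]
  module

theorem sub_mul_sub_eq_smul_of_lt' (hP : ∀ a b, b ≤ a → P b * P a = c ^ b • P a) {m n : ℕ}
    (hnm : n < m) :
    (P (n + 1) - P n) * (P (m + 1) - P m) = ((c - 1) * c ^ n) • (P (m + 1) - P m) := by
  rw [sub_mul, mul_sub, mul_sub, hP _ _ (by omega), hP _ _ (by omega), hP _ _ (by omega),
    hP _ _ (by omega), pow_succ]
  module

theorem sub_mul_self_eq (hl : ∀ a b, b ≤ a → P a * P b = c ^ b • P a)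
    (hr : ∀ a b, b ≤ a → P b * P a = c ^ b • P a) (m : ℕ) :
    (P (m + 1) - P m) * (P (m + 1) - P m)
      = ((c - 2) * c ^ m) • (P (m + 1) - P m) + ((c - 1) * c ^ m) • P m := by
  rw [sub_mul, mul_sub, mul_sub, hl _ _ le_rfl, hl _ _ m.le_succ, hr _ _ m.le_succ, hl _ _ le_rfl,
    pow_succ]
  module

end

theorem stmt_19_general {A : Type*} [Ring A] [Algebra ℂ A] [StarRing A]
    (q : ℕ) (s : A) (M : ℕ → A)
    (hs : star s * s = (q : ℂ) • (1 : A))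
    (hrange : ∀ n : ℕ, s ^ n * star s ^ n = ∑ i ∈ Finset.range (n + 1), M i) :
    (∀ m n : ℕ, n < m → 0 < n →
      M m * M n = (((q : ℂ) - 1) * (q : ℂ) ^ (n - 1)) • M m ∧
      M n * M m = (((q : ℂ) - 1) * (q : ℂ) ^ (n - 1)) • M m) ∧
    (∀ m : ℕ, 0 < m →
      M m * M m = (((q : ℂ) - 2) * (q : ℂ) ^ (m - 1)) • M m
        + (((q : ℂ) - 1) * (q : ℂ) ^ (m - 1)) • ∑ i ∈ Finset.range m, M i) := by
  set P : ℕ → A := fun n => s ^ n * star s ^ n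
  have hM : ∀ n, M (n + 1) = P (n + 1) - P n := fun n => by
    simp only [P, hrange, Finset.sum_range_succ _ (n + 1), add_sub_cancel_left]
  have hl a b (hba : b ≤ a) : P a * P b = (q : ℂ) ^ b • P a :=
    pow_mul_pow_mul_pow_mul_pow_of_le hs hba
  have hr a b (hba : b ≤ a) : P b * P a = (q : ℂ) ^ b • P a :=
    pow_mul_pow_mul_pow_mul_pow_of_le' hs hba
  refine ⟨fun m n hnm hn => ?_, fun m hm => ?_⟩
  · obtain ⟨m, rfl⟩ : ∃ k, m = k + 1 := ⟨m - 1, by omega⟩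
    obtain ⟨n, rfl⟩ : ∃ k, n = k + 1 := ⟨n - 1, by omega⟩
    rw [hM, hM, Nat.add_sub_cancel]
    exact ⟨sub_mul_sub_eq_smul_of_lt hl (by omega), sub_mul_sub_eq_smul_of_lt' hr (by omega)⟩
  · obtain ⟨m, rfl⟩ : ∃ k, m = k + 1 := ⟨m - 1, by omega⟩
    rw [hM, Nat.add_sub_cancel, ← hrange]
    exact sub_mul_self_eq hl hr m

/-- in a unital complex *-algebra containing an element `[s]` and
self-adjoint elements `M_n` with `M_0 = 1`, `[s]*[s] = q·1` and
`[s]ⁿ([s]*)ⁿ = Σ_{i=0}^n M_i`, the `M_n` satisfy the multiplication rules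
`M_mM_n = M_nM_m = (q−1)q^{n−1}M_m` for `m > n > 0` and
`M_m² = (q−2)q^{m−1}M_m + (q−1)q^{m−1}Σ_{i=0}^{m−1}M_i` for `m > 0`. -/
theorem stmt_19 {A : Type*} [Ring A] [Algebra ℂ A] [StarRing A] [StarModule ℂ A]
    (q : ℕ) (hq : 2 ≤ q) (s : A) (M : ℕ → A)
    (hM0 : M 0 = 1) (hsa : ∀ n, star (M n) = M n)
    (hs : star s * s = (q : ℂ) • (1 : A))
    (hrange : ∀ n : ℕ, s ^ n * star s ^ n = ∑ i ∈ Finset.range (n + 1), M i) :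
    (∀ m n : ℕ, n < m → 0 < n →
      M m * M n = (((q : ℂ) - 1) * (q : ℂ) ^ (n - 1)) • M m ∧
      M n * M m = (((q : ℂ) - 1) * (q : ℂ) ^ (n - 1)) • M m) ∧
    (∀ m : ℕ, 0 < m →
      M m * M m = (((q : ℂ) - 2) * (q : ℂ) ^ (m - 1)) • M m
        + (((q : ℂ) - 1) * (q : ℂ) ^ (m - 1)) • ∑ i ∈ Finset.range m, M i) :=
  stmt_19_general q s M hs hrange
end
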